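/- Let 𝒜 = ⟨A,R⟩ be an almost bounded structure. Then both ⟨A,S⟩ and ⟨Uf(A), S^ue⟩ are bounded structures. -/

import Mathlib

open FirstOrder Cardinal

namespace UEx

/-- Elements of infinite in- or out-degree. -/
def RInf (R : A → A → Prop) : Set A :=
  {w | {v | R w v}.Infinite ∨ {v | R v w}.Infinite}

/-- A uniform finite bound on all in- and out-degrees. -/
def Bounded (R : A → A → Prop) : Prop :=
  ∃ n : ℕ, ∀ w : A, {v | R w v}.Finite ∧ {v | R v w}.Finite ∧
    {v | R w v}.ncard ≤ n ∧ {v | R v w}.ncard ≤ n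

/-- Almost bounded: finitely many elements of infinite degree, and a uniform
finite bound on the degrees of the remaining elements. -/
def AlmostBounded (R : A → A → Prop) : Prop :=
  (RInf R).Finite ∧ ∃ n : ℕ, ∀ w ∉ RInf R,
    {v | R w v}.ncard ≤ n ∧ {v | R v w}.ncard ≤ n

/-- P = {(s,t) ∈ R : s ∈ R∞ or t ∈ R∞}. -/
def PRel (R : A → A → Prop) (s t : A) : Prop := R s t ∧ (s ∈ RInf R ∨ t ∈ RInf R)

/-- S = R \ P. -/
def SRel (R : A → A → Prop) (s t : A) : Prop := R s t ∧ ¬(s ∈ RInf R ∨ t ∈ RInf R)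

/-- The ultrafilter extension of a binary relation. -/
def ueRel (Q : A → A → Prop) (u v : Ultrafilter A) : Prop :=
  ∀ X ∈ v, {w | ∃ s ∈ X, Q w s} ∈ u

lemma ueRel_flip_of {A : Type*} {Q : A → A → Prop} {u v : Ultrafilter A}
    (h : ueRel Q u v) : ueRel (fun a b => Q b a) v u := by
  intro X hX
  by_contra hc
  have h1 : {s | ∃ w ∈ X, Q w s}ᶜ ∈ v := Ultrafilter.compl_mem_iff_notMem.2 hc
  have h2 := h _ h1
  have h3 : X ∩ {w | ∃ s ∈ {s | ∃ w ∈ X, Q w s}ᶜ, Q w s} ∈ u := Filter.inter_mem hX h2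
  obtain ⟨w, hwX, s, hs, hQ⟩ := Ultrafilter.nonempty_of_mem h3
  exact hs ⟨w, hwX, hQ⟩

lemma sep_lemma {A : Type*} {u v : Ultrafilter A} (h : u ≠ v) :
    ∃ Y : Set A, Y ∈ u ∧ Yᶜ ∈ v := by
  by_contra hc
  push_neg at hc
  apply h
  ext Y
  constructor
  · intro hY
    by_contra hY'
    exact (hc Y hY) (Ultrafilter.compl_mem_iff_notMem.2 hY')
  · intro hY
    by_contra hY'
    exact (hc Yᶜ (Ultrafilter.compl_mem_iff_notMem.2 hY')) (by simpa using hY)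

lemma finset_bound {A : Type*} (Q : A → A → Prop) (n : ℕ)
    (hb : ∀ w, {v | Q w v}.Finite ∧ {v | Q w v}.ncard ≤ n)
    (u : Ultrafilter A) (t : Finset (Ultrafilter A))
    (ht : ∀ v ∈ t, ueRel Q u v) : t.card ≤ n := by
  classical
  -- separating sets
  let Y : Ultrafilter A → Ultrafilter A → Set A :=
    fun v v' => if h : v ≠ v' then Classical.choose (sep_lemma h) else Set.univ
  have hY1 : ∀ v v' : Ultrafilter A, v ≠ v' → Y v v' ∈ v := by
    intro v v' h
    simp only [Y, dif_pos h]
    exact (Classical.choose_spec (sep_lemma h)).1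
  have hY2 : ∀ v v' : Ultrafilter A, v ≠ v' → (Y v v')ᶜ ∈ v' := by
    intro v v' h
    simp only [Y, dif_pos h]
    exact (Classical.choose_spec (sep_lemma h)).2
  let X : Ultrafilter A → Set A := fun v => ⋂ v' ∈ t.erase v, (Y v v' ∩ (Y v' v)ᶜ)
  have hXmem : ∀ v ∈ t, X v ∈ v := by
    intro v hv
    apply (Filter.biInter_finset_mem _).2
    intro v' hv'
    have hne : v ≠ v' := fun hEq => (Finset.mem_erase.1 hv').1 hEq.symm
    exact Filter.inter_mem (hY1 v v' hne) (hY2 v' v hne.symm)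
  have hXdisj : ∀ v ∈ t, ∀ v' ∈ t, v ≠ v' → ∀ x, x ∈ X v → x ∈ X v' → False := by
    intro v hv v' hv' hne x hx hx'
    have h1 : x ∈ Y v v' ∩ (Y v' v)ᶜ := by
      have := Set.mem_iInter₂.1 hx v' (Finset.mem_erase.2 ⟨hne.symm, hv'⟩)
      exact this
    have h2 : x ∈ Y v' v ∩ (Y v v')ᶜ := by
      have := Set.mem_iInter₂.1 hx' v (Finset.mem_erase.2 ⟨hne, hv⟩)
      exact this
    exact h2.2 h1.1
  -- the big intersection is in u
  have hbig : (⋂ v ∈ t, {w | ∃ s ∈ X v, Q w s}) ∈ u := by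
    apply (Filter.biInter_finset_mem _).2
    intro v hv
    exact ht v hv (X v) (hXmem v hv)
  obtain ⟨w, hw⟩ := Ultrafilter.nonempty_of_mem hbig
  have hw' : ∀ v : {v // v ∈ t}, ∃ s, s ∈ X v.1 ∧ Q w s := by
    intro v
    obtain ⟨s, hs1, hs2⟩ := Set.mem_iInter₂.1 hw v.1 v.2
    exact ⟨s, hs1, hs2⟩
  choose s hsX hsQ using hw'
  have hwf := hb w
  calc t.card ≤ (hwf.1.toFinset).card := by
        apply Finset.card_le_card_of_injOn
          (fun v => if h : v ∈ t then s ⟨v, h⟩ else w)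
        · intro v hv
          simp only [dif_pos hv, Set.Finite.mem_toFinset]
          have hv0 : v ∈ t := hv
          simpa [dif_pos hv0] using hsQ ⟨v, hv0⟩
        · intro v hv v' hv' hEq
          simp only [Finset.mem_coe] at hv hv'
          by_contra hne
          simp only [dif_pos hv, dif_pos hv'] at hEq
          exact hXdisj v hv v' hv' hne (s ⟨v, hv⟩) (hsX ⟨v, hv⟩)
            (hEq ▸ hsX ⟨v', hv'⟩)
    _ ≤ n := by rw [← Set.ncard_eq_toFinset_card _ hwf.1]; exact hwf.2

lemma finite_and_ncard_le {α : Type*} (s : Set α) (n : ℕ)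
    (h : ∀ t : Finset α, ↑t ⊆ s → t.card ≤ n) : s.Finite ∧ s.ncard ≤ n := by
  have hf : s.Finite := by
    by_contra hi
    have hi : s.Infinite := hi
    obtain ⟨t, hts, htc⟩ := hi.exists_subset_card_eq (n + 1)
    exact absurd (h t hts) (by omega)
  refine ⟨hf, ?_⟩
  rw [Set.ncard_eq_toFinset_card _ hf]
  exact h hf.toFinset (by simp)

/-- Observation: if `𝒜 = ⟨A,R⟩` is almost bounded, then both `⟨A,S⟩` and
`⟨Uf(A), S^ue⟩` are bounded structures. -/
theorem bounded_of_almostBounded {A : Type*} (R : A → A → Prop)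
    (h : AlmostBounded R) :
    Bounded (SRel R) ∧ Bounded (ueRel (SRel R)) := by
  obtain ⟨hfin, n, hn⟩ := h
  have hS : ∀ w : A, ({v | SRel R w v}.Finite ∧ {v | SRel R w v}.ncard ≤ n) ∧
      ({v | SRel R v w}.Finite ∧ {v | SRel R v w}.ncard ≤ n) := by
    intro w
    by_cases hw : w ∈ RInf R
    · have e1 : {v | SRel R w v} = ∅ := by
        ext v; simp only [Set.mem_setOf_eq, Set.mem_empty_iff_false, iff_false]
        intro hv; exact hv.2 (Or.inl hw)
      have e2 : {v | SRel R v w} = ∅ := by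
        ext v; simp only [Set.mem_setOf_eq, Set.mem_empty_iff_false, iff_false]
        intro hv; exact hv.2 (Or.inr hw)
      simp [e1, e2]
    · have hw' : ¬({v | R w v}.Infinite ∨ {v | R v w}.Infinite) := hw
      push_neg at hw'
      have hf1 : {v | R w v}.Finite := hw'.1
      have hf2 : {v | R v w}.Finite := hw'.2
      have sub1 : {v | SRel R w v} ⊆ {v | R w v} := fun v hv => hv.1
      have sub2 : {v | SRel R v w} ⊆ {v | R v w} := fun v hv => hv.1
      exact ⟨⟨hf1.subset sub1, le_trans (Set.ncard_le_ncard sub1 hf1) (hn w hw).1⟩,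
        ⟨hf2.subset sub2, le_trans (Set.ncard_le_ncard sub2 hf2) (hn w hw).2⟩⟩
  constructor
  · exact ⟨n, fun w => ⟨(hS w).1.1, (hS w).2.1, (hS w).1.2, (hS w).2.2⟩⟩
  · refine ⟨n, fun u => ?_⟩
    have hout := finite_and_ncard_le {v | ueRel (SRel R) u v} n (by
      intro t ht
      exact finset_bound (SRel R) n (fun w => (hS w).1) u t (fun v hv => ht hv))
    have heq : {u' | ueRel (SRel R) u' u} = {u' | ueRel (fun a b => SRel R b a) u u'} := by
      ext u'
      exact ⟨fun hv => ueRel_flip_of hv, fun hv => ueRel_flip_of hv⟩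
    have hin := finite_and_ncard_le {u' | ueRel (SRel R) u' u} n (by
      intro t ht
      rw [heq] at ht
      exact finset_bound (fun a b => SRel R b a) n (fun w => (hS w).2) u t
        (fun v hv => ht hv))
    exact ⟨hout.1, hin.1, hout.2, hin.2⟩

end UEx
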